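/- arXiv:2207.06116 — 11 statements merged into one kernel-verified Lean document; each statement's English description precedes it below -/
import Mathlib

section
/- Let ϑ ≥ 1, X ≥ 0, I > 0 be reals and let t₀ ≤ t₁ be reals. Let H, R : ℝ → ℝ be functions such that (t₁ − t₀) ≤ H(t₁) − H(t₀) ≤ ϑ·(t₁ − t₀), and such that the corrected clock R deviates from the hardware clock H by at most the accumulated correction budget: |R(t₁) − R(t₀) − (H(t₁) − H(t₀))| ≤ (⌊ϑ·(t₁ − t₀)/I⌋ + 1)·X·(ϑ − 1)·I. Then |R(t₁) − R(t₀) − (t₁ − t₀)| ≤ (ϑ·X + 1)·(ϑ − 1)·(t₁ − t₀) + X·(ϑ − 1)·I. -/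
/-- Paper: Lemma 1. Bound on the drift of the locally corrected clock `R`
relative to real time, given the hardware clock drift bound `ϑ` and the
accumulated local correction budget. -/
theorem stmt0 (ϑ X I t₀ t₁ : ℝ) (hϑ : 1 ≤ ϑ) (hX : 0 ≤ X) (hI : 0 < I)
    (ht : t₀ ≤ t₁) (H R : ℝ → ℝ)
    (hH1 : t₁ - t₀ ≤ H t₁ - H t₀) (hH2 : H t₁ - H t₀ ≤ ϑ * (t₁ - t₀))
    (hR : |R t₁ - R t₀ - (H t₁ - H t₀)| ≤
      ((⌊ϑ * (t₁ - t₀) / I⌋ : ℤ) + 1 : ℝ) * X * (ϑ - 1) * I) :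
    |R t₁ - R t₀ - (t₁ - t₀)| ≤
      (ϑ * X + 1) * (ϑ - 1) * (t₁ - t₀) + X * (ϑ - 1) * I := by
  have hfloor : ((⌊ϑ * (t₁ - t₀) / I⌋ : ℤ) : ℝ) + 1 ≤ ϑ * (t₁ - t₀) / I + 1 :=
    by linarith [Int.floor_le (ϑ * (t₁ - t₀) / I)]
  have hnn : 0 ≤ X * (ϑ - 1) * I := by nlinarith [mul_nonneg (mul_nonneg hX (by linarith : (0:ℝ) ≤ ϑ - 1)) hI.le]
  have hbound : ((⌊ϑ * (t₁ - t₀) / I⌋ : ℤ) + 1 : ℝ) * X * (ϑ - 1) * I ≤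
      ϑ * (t₁ - t₀) * X * (ϑ - 1) + X * (ϑ - 1) * I := by
    have h1 : ((⌊ϑ * (t₁ - t₀) / I⌋ : ℤ) + 1 : ℝ) * (X * (ϑ - 1) * I) ≤
        (ϑ * (t₁ - t₀) / I + 1) * (X * (ϑ - 1) * I) :=
      mul_le_mul_of_nonneg_right hfloor hnn
    have h2 : (ϑ * (t₁ - t₀) / I + 1) * (X * (ϑ - 1) * I) =
        ϑ * (t₁ - t₀) * X * (ϑ - 1) + X * (ϑ - 1) * I := by
      field_simp
    nlinarith [h1, h2]
  have habs : |H t₁ - H t₀ - (t₁ - t₀)| ≤ (ϑ - 1) * (t₁ - t₀) := by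
    rw [abs_le]; constructor <;> nlinarith
  have key : |R t₁ - R t₀ - (t₁ - t₀)| ≤
      |R t₁ - R t₀ - (H t₁ - H t₀)| + |H t₁ - H t₀ - (t₁ - t₀)| := by
    have := abs_sub_abs_le_abs_sub (R t₁ - R t₀ - (t₁ - t₀)) (R t₁ - R t₀ - (H t₁ - H t₀))
    calc |R t₁ - R t₀ - (t₁ - t₀)|
        = |(R t₁ - R t₀ - (H t₁ - H t₀)) + (H t₁ - H t₀ - (t₁ - t₀))| := by ring_nf
      _ ≤ _ := abs_add_le _ _
  nlinarith [key, hR, habs, hbound]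
end

section
/- Let ϑ ≥ 1, X ≥ 1, I > 0, and B ≥ 0 be reals. Let (tᵢ)_{i∈ℕ} be a nondecreasing sequence of reals with tᵢ − t_{i−1} ≤ I for all i ≥ 1, and let (aᵢ)_{i∈ℕ} be nonnegative reals with a₀ ≤ B and aᵢ ≤ max{a_{i−1} − X·(ϑ − 1)·I, 0} + (ϑ − 1)·(tᵢ − t_{i−1}) for all i ≥ 1. Then for all i ∈ ℕ: aᵢ ≤ max{B − (X − 1)·(ϑ − 1)·(tᵢ − t₀), (ϑ − 1)·I}. -/
/-- Paper: inner claim in the proof of Lemma 2. Induction at iteration times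
of the local synchronization loop: `a i` models the absolute offset of the
corrected clock to real time at the `i`-th iteration time `t i`. -/
theorem stmt1 (ϑ X I B : ℝ) (hϑ : 1 ≤ ϑ) (hX : 1 ≤ X) (hI : 0 < I)
    (hB : 0 ≤ B) (t : ℕ → ℝ) (hmono : Monotone t)
    (htI : ∀ i : ℕ, 1 ≤ i → t i - t (i - 1) ≤ I)
    (a : ℕ → ℝ) (ha : ∀ i, 0 ≤ a i) (ha0 : a 0 ≤ B)
    (hrec : ∀ i : ℕ, 1 ≤ i →
      a i ≤ max (a (i - 1) - X * (ϑ - 1) * I) 0 + (ϑ - 1) * (t i - t (i - 1))) :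
    ∀ i : ℕ, a i ≤ max (B - (X - 1) * (ϑ - 1) * (t i - t 0)) ((ϑ - 1) * I) := by
  have hd : (0:ℝ) ≤ ϑ - 1 := by linarith
  intro i
  induction i with
  | zero =>
    apply le_max_of_le_left
    simp only [sub_self, mul_zero]
    linarith
  | succ n ih =>
    have h1 : (1:ℕ) ≤ n + 1 := Nat.le_add_left 1 n
    have hrec' := hrec (n+1) h1
    have htI' := htI (n+1) h1
    simp only [Nat.add_sub_cancel] at hrec' htI'
    have hΔ0 : 0 ≤ t (n+1) - t n := by
      have := hmono (Nat.le_succ n); linarith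
    have ht0 : t 0 ≤ t n := hmono (Nat.zero_le n)
    rcases le_or_gt (a n - X*(ϑ-1)*I) 0 with hc | hc
    · rw [max_eq_right hc] at hrec'
      apply le_max_of_le_right
      nlinarith
    · rw [max_eq_left hc.le] at hrec'
      have key : a (n+1) ≤ a n - (X-1)*(ϑ-1)*(t (n+1) - t n) := by
        nlinarith [mul_nonneg (mul_nonneg (by linarith : (0:ℝ) ≤ X) hd)
          (by linarith : (0:ℝ) ≤ I - (t (n+1) - t n))]
      rcases le_max_iff.mp ih with h | h
      · apply le_max_of_le_left
        nlinarith
      · apply le_max_of_le_right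
        nlinarith [mul_nonneg (mul_nonneg (by linarith : (0:ℝ) ≤ X - 1) hd) hΔ0]
end

section
/- Let ϑ ≥ 1, X > 1, I > 0 be reals and t₀ ≤ t₁ reals. Let R : ℝ → ℝ and let (t'ᵢ)_{i∈ℕ} be a nondecreasing sequence of reals (the loop iteration times) with t₀ ≤ t'₀ ≤ t₀ + I, with t'ᵢ − t'_{i−1} ≤ I for all i ≥ 1, and with t'_N ≥ t₁ for some N. Assume: (a) for all t ∈ [t₀, t'₀]: |R(t) − t| ≤ |R(t₀) − t₀| + (X + 1)·(ϑ − 1)·I; (b) for all i ≥ 1: |R(t'ᵢ) − t'ᵢ| ≤ max{|R(t'_{i−1}) − t'_{i−1}| − X·(ϑ − 1)·I, 0} + (ϑ − 1)·(t'ᵢ − t'_{i−1}); (c) for all i ∈ ℕ and t ∈ [t'ᵢ, t'_{i+1}]: |R(t) − t| ≤ |R(t'ᵢ) − t'ᵢ| + (ϑ − 1)·(t − t'ᵢ). Then for all t ∈ [t₀, t₁]: |R(t) − t| ≤ max{|R(t₀) − t₀| + 3·X·(ϑ − 1)·I − (X − 1)·(ϑ − 1)·(t − t₀), 2·(ϑ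 − 1)·I}. -/
/-- Paper: Lemma 2. If the reference clock returns real time throughout
`[t₀, t₁]`, the locally corrected clock `R` converges toward real time at
amortized rate `X − 1`. -/
theorem stmt2 (ϑ X I t₀ t₁ : ℝ) (hϑ : 1 ≤ ϑ) (hX : 1 < X) (hI : 0 < I)
    (ht : t₀ ≤ t₁) (R : ℝ → ℝ) (t' : ℕ → ℝ) (hmono : Monotone t')
    (h0 : t₀ ≤ t' 0) (h0' : t' 0 ≤ t₀ + I)
    (hstep : ∀ i : ℕ, 1 ≤ i → t' i - t' (i - 1) ≤ I)
    (hN : ∃ N : ℕ, t₁ ≤ t' N)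
    (ha : ∀ t : ℝ, t₀ ≤ t → t ≤ t' 0 →
      |R t - t| ≤ |R t₀ - t₀| + (X + 1) * (ϑ - 1) * I)
    (hb : ∀ i : ℕ, 1 ≤ i →
      |R (t' i) - t' i| ≤
        max (|R (t' (i - 1)) - t' (i - 1)| - X * (ϑ - 1) * I) 0
          + (ϑ - 1) * (t' i - t' (i - 1)))
    (hc : ∀ i : ℕ, ∀ t : ℝ, t' i ≤ t → t ≤ t' (i + 1) →
      |R t - t| ≤ |R (t' i) - t' i| + (ϑ - 1) * (t - t' i)) :
    ∀ t : ℝ, t₀ ≤ t → t ≤ t₁ →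
      |R t - t| ≤
        max (|R t₀ - t₀| + 3 * X * (ϑ - 1) * I - (X - 1) * (ϑ - 1) * (t - t₀))
          (2 * (ϑ - 1) * I) := by
  intro t ht0 ht1
  have hδ : (0:ℝ) ≤ ϑ - 1 := by linarith
  have hX0 : (0:ℝ) < X := by linarith
  -- key bound at iteration times
  have key : ∀ i : ℕ, |R (t' i) - t' i| ≤
      max (|R t₀ - t₀| + (X + 1) * (ϑ - 1) * I - (X - 1) * (ϑ - 1) * (t' i - t' 0))
        ((ϑ - 1) * I) := by
    intro i
    induction i with
    | zero =>
      have h := ha (t' 0) h0 le_rfl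
      have h00 : (X - 1) * (ϑ - 1) * (t' 0 - t' 0) = 0 := by rw [sub_self, mul_zero]
      exact le_max_of_le_left (by linarith)
    | succ k ih =>
      have hb' := hb (k + 1) (by omega)
      simp only [Nat.add_sub_cancel] at hb'
      have hΔ : t' (k + 1) - t' k ≤ I := by
        have := hstep (k + 1) (by omega)
        simpa using this
      have hΔ0 : (0:ℝ) ≤ t' (k + 1) - t' k := sub_nonneg.2 (hmono (Nat.le_succ k))
      have hmain : max (|R (t' k) - t' k| - X * (ϑ - 1) * I) 0
            + (ϑ - 1) * (t' (k + 1) - t' k) ≤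
          max (|R t₀ - t₀| + (X + 1) * (ϑ - 1) * I
            - (X - 1) * (ϑ - 1) * (t' (k + 1) - t' 0)) ((ϑ - 1) * I) := by
        rcases le_total (|R (t' k) - t' k| - X * (ϑ - 1) * I) 0 with h | h
        · rw [max_eq_right h]
          refine le_trans ?_ (le_max_right _ _)
          simpa using mul_le_mul_of_nonneg_left hΔ hδ
        · rw [max_eq_left h]
          rcases max_cases (|R t₀ - t₀| + (X + 1) * (ϑ - 1) * I
              - (X - 1) * (ϑ - 1) * (t' k - t' 0)) ((ϑ - 1) * I) with ⟨heq, _⟩ | ⟨heq, _⟩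
          · rw [heq] at ih
            refine le_trans ?_ (le_max_left _ _)
            nlinarith [mul_nonneg (mul_nonneg hX0.le hδ) (sub_nonneg.2 hΔ),
              mul_nonneg hδ hΔ0]
          · rw [heq] at ih
            refine le_trans ?_ (le_max_right _ _)
            nlinarith [mul_nonneg (mul_nonneg hX0.le hδ) hΔ0, mul_nonneg hδ hΔ0,
              mul_nonneg (mul_nonneg hδ hI.le) (by linarith : (0:ℝ) ≤ X - 1)]
      exact hb'.trans hmain
  rcases le_total t (t' 0) with hcase | hcase
  · -- before the first iteration
    have h := ha t ht0 hcase
    refine le_trans h (le_trans ?_ (le_max_left _ _))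
    nlinarith [mul_nonneg (mul_nonneg (by linarith : (0:ℝ) ≤ X - 1) hδ)
      (by linarith : (0:ℝ) ≤ I - (t - t₀)),
      mul_nonneg (mul_nonneg hX0.le hδ) hI.le]
  · -- find i with t' i ≤ t ≤ t' (i+1)
    obtain ⟨N, hN1⟩ := hN
    have hfind : ∀ M : ℕ, t ≤ t' M → ∃ i : ℕ, t' i ≤ t ∧ t ≤ t' (i + 1) := by
      intro M
      induction M with
      | zero => intro h; exact ⟨0, hcase, h.trans (hmono (Nat.le_succ 0))⟩
      | succ k ih =>
        intro h
        rcases le_total t (t' k) with h' | h'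
        · exact ih h'
        · exact ⟨k, h', h⟩
    obtain ⟨i, hi1, hi2⟩ := hfind N (ht1.trans hN1)
    have hci := hc i t hi1 hi2
    have hΔ : t - t' i ≤ I := by
      have := hstep (i + 1) (by omega)
      simp only [Nat.add_sub_cancel] at this
      linarith
    have hΔ0 : (0:ℝ) ≤ t - t' i := by linarith
    have hi0 : t' 0 ≤ t' i := hmono (Nat.zero_le i)
    rcases max_cases (|R t₀ - t₀| + (X + 1) * (ϑ - 1) * I
        - (X - 1) * (ϑ - 1) * (t' i - t' 0)) ((ϑ - 1) * I) with ⟨heq, _⟩ | ⟨heq, _⟩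
    · have hk := key i; rw [heq] at hk
      refine le_trans ?_ (le_max_left _ _)
      nlinarith [mul_nonneg (mul_nonneg hX0.le hδ) (by linarith : (0:ℝ) ≤ I - (t - t' i)),
        mul_nonneg (mul_nonneg (by linarith : (0:ℝ) ≤ X - 1) hδ)
          (by linarith : (0:ℝ) ≤ I - (t' 0 - t₀))]
    · have hk := key i; rw [heq] at hk
      refine le_trans ?_ (le_max_right _ _)
      nlinarith [mul_nonneg hδ (by linarith : (0:ℝ) ≤ I - (t - t' i))]
end

section
/- Let ϑ ≥ 1, X ≥ 1, I > 0 be reals and t₀ ≤ t₁ reals. Let R : ℝ → ℝ with R(t₀) = t₀, and let (t'ᵢ)_{i∈ℕ} be a nondecreasing sequence of reals with t'₀ = t₀, t'ᵢ − t'_{i−1} ≤ I for all i ≥ 1, and t'_N ≥ t₁ for some N. Assume: (a) for all i ≥ 1: |R(t'ᵢ) − t'ᵢ| ≤ max{|R(t'_{i−1}) − t'_{i−1}| − X·(ϑ − 1)·I, 0} + (ϑ − 1)·(t'ᵢ − t'_{i−1}); (b) for all i ∈ ℕ and t ∈ [t'ᵢ, t'_{i+1}]: |R(t) − t| ≤ |R(t'ᵢ)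 − t'ᵢ| + (ϑ − 1)·(t − t'ᵢ). Then for all t ∈ [t₀, t₁]: |R(t) − t| ≤ 2·(ϑ − 1)·I. -/
/-- Paper: Corollary 1. If the reference clock always returns real time and
the corrected clock `R` is initialized to the correct time with the first
loop iteration starting at initialization, then `|R t − t| ≤ 2(ϑ−1)I`. -/
theorem stmt3 (ϑ X I t₀ t₁ : ℝ) (hϑ : 1 ≤ ϑ) (hX : 1 ≤ X) (hI : 0 < I)
    (ht : t₀ ≤ t₁) (R : ℝ → ℝ) (hR0 : R t₀ = t₀)
    (t' : ℕ → ℝ) (hmono : Monotone t') (h0 : t' 0 = t₀)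
    (hstep : ∀ i : ℕ, 1 ≤ i → t' i - t' (i - 1) ≤ I)
    (hN : ∃ N : ℕ, t₁ ≤ t' N)
    (ha : ∀ i : ℕ, 1 ≤ i →
      |R (t' i) - t' i| ≤
        max (|R (t' (i - 1)) - t' (i - 1)| - X * (ϑ - 1) * I) 0
          + (ϑ - 1) * (t' i - t' (i - 1)))
    (hb : ∀ i : ℕ, ∀ t : ℝ, t' i ≤ t → t ≤ t' (i + 1) →
      |R t - t| ≤ |R (t' i) - t' i| + (ϑ - 1) * (t - t' i)) :
    ∀ t : ℝ, t₀ ≤ t → t ≤ t₁ → |R t - t| ≤ 2 * (ϑ - 1) * I := by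
  have hϑ0 : 0 ≤ ϑ - 1 := by linarith
  have hkey : ∀ i, |R (t' i) - t' i| ≤ (ϑ - 1) * I := by
    intro i
    induction i with
    | zero =>
      rw [h0, hR0]
      simp
      positivity
    | succ k ih =>
      have h1 : (1:ℕ) ≤ k + 1 := Nat.le_add_left 1 k
      have hak := ha (k+1) h1
      have hsk := hstep (k+1) h1
      simp only [Nat.add_sub_cancel] at hak hsk
      have hm : max (|R (t' k) - t' k| - X * (ϑ - 1) * I) 0 = 0 := by
        apply max_eq_right
        nlinarith [mul_nonneg (mul_nonneg (sub_nonneg.mpr hX) hϑ0) hI.le]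
      rw [hm] at hak
      have hmn : t' k ≤ t' (k+1) := hmono (Nat.le_succ k)
      nlinarith
  intro t ht0 ht1
  classical
  obtain ⟨N, hNt⟩ := hN
  have hex : ∃ j, t ≤ t' j := ⟨N, le_trans ht1 hNt⟩
  obtain ⟨i, hi1, hi2⟩ : ∃ i, t' i ≤ t ∧ t ≤ t' (i+1) := by
    rcases Nat.eq_zero_or_pos (Nat.find hex) with h | h
    · refine ⟨0, ?_, ?_⟩
      · rw [h0]; exact ht0
      · have := Nat.find_spec hex
        rw [h] at this
        exact le_trans this (hmono (Nat.zero_le 1))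
    · obtain ⟨k, hk⟩ := Nat.exists_eq_add_of_lt h
      simp only [Nat.zero_add] at hk
      refine ⟨k, ?_, ?_⟩
      · have hmin := Nat.find_min hex (by omega : k < Nat.find hex)
        linarith [not_le.mp hmin]
      · have := Nat.find_spec hex
        rw [hk] at this
        exact this
  have hbt := hb i t hi1 hi2
  have hsk := hstep (i+1) (Nat.le_add_left 1 i)
  simp only [Nat.add_sub_cancel] at hsk
  have := hkey i
  nlinarith
end

section
/- Let G be a finite nonempty set, p : G → ℝ, δ ≥ 0, c > 0 reals, and for each v ∈ G let Δ_v ∈ ℝ satisfy min_{x∈G} p(x) ≤ p(v) + Δ_v ≤ max_{x∈G} p(x) + δ. Define the thresholded adjustment Δ̃_v := c if Δ_v ≥ δ + 2c, Δ̃_v := −c if Δ_v ≤ −2c, and Δ̃_v := 0 otherwise. Then for every v ∈ G with Δ̃_v ≠ 0: min_{x∈G} p(x) + c ≤ p(v) + Δ̃_v ≤ max_{x∈G} p(x) − c. -/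
/-- Paper: Lemma 3. Any applied (thresholded, capped) clock correction moves
the node strictly into the interior of the envelope of pulse times: if the
thresholded adjustment `Δ̃_v` is nonzero, then
`min p + c ≤ p v + Δ̃_v ≤ max p − c`. -/
theorem stmt6 (G : Type*) [Fintype G] [Nonempty G]
    (p Δ Δt : G → ℝ) (δ c : ℝ) (hδ : 0 ≤ δ) (hc : 0 < c)
    (hΔ : ∀ v : G,
      Finset.univ.inf' Finset.univ_nonempty p ≤ p v + Δ v ∧
      p v + Δ v ≤ Finset.univ.sup' Finset.univ_nonempty p + δ)
    (hΔt : ∀ v : G, Δt v =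
      if δ + 2 * c ≤ Δ v then c else if Δ v ≤ -(2 * c) then -c else 0) :
    ∀ v : G, Δt v ≠ 0 →
      Finset.univ.inf' Finset.univ_nonempty p + c ≤ p v + Δt v ∧
      p v + Δt v ≤ Finset.univ.sup' Finset.univ_nonempty p - c := by
  intro v hv
  have hinf : Finset.univ.inf' Finset.univ_nonempty p ≤ p v :=
    Finset.inf'_le _ (Finset.mem_univ v)
  have hsup : p v ≤ Finset.univ.sup' Finset.univ_nonempty p :=
    Finset.le_sup' _ (Finset.mem_univ v)
  have h1 := (hΔ v).1
  have h2 := (hΔ v).2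
  have ht := hΔt v
  by_cases hA : δ + 2 * c ≤ Δ v
  · rw [if_pos hA] at ht
    rw [ht]
    constructor
    · linarith
    · linarith
  · rw [if_neg hA] at ht
    by_cases hB : Δ v ≤ -(2 * c)
    · rw [if_pos hB] at ht
      rw [ht]
      constructor <;> linarith
    · rw [if_neg hB] at ht
      exact absurd ht hv
end

section
/- Let G be a finite nonempty set, p : G → ℝ, δ ≥ 0, c ≥ 0 reals, and for each v ∈ G let Δ_v ∈ ℝ satisfy: (i) min_{x∈G} p(x) ≤ p(v) + Δ_v ≤ max_{x∈G} p(x) + δ, and (ii) for all v, w ∈ G: (p(v) + Δ_v) − (p(w) + Δ_w) ≤ ‖p‖/2 + δ, where ‖p‖ := max_{x∈G} p(x) − min_{x∈G} p(x). Define the thresholded adjustment Δ̃_v := c if Δ_v ≥ δ + 2c, Δ̃_v := −c if Δ_v ≤ −2c, and Δ̃_v := 0 otherwise. Then for all v, w ∈ G: (p(v) + Δ̃_v) − (p(w) + Δ̃_w) ≤ max{‖p‖ − c, 4δ + 10c}. -/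
/-- Paper: Lemma 4. Large skews enforce clock corrections: after the
thresholded, capped corrections `Δ̃`, the skew between any two correct nodes
either decreases by `c` or is already at most `4δ + 10c`. -/
theorem stmt7 (G : Type*) [Fintype G] [Nonempty G]
    (p Δ Δt : G → ℝ) (δ c : ℝ) (hδ : 0 ≤ δ) (hc : 0 ≤ c)
    (hΔ : ∀ v : G,
      Finset.univ.inf' Finset.univ_nonempty p ≤ p v + Δ v ∧
      p v + Δ v ≤ Finset.univ.sup' Finset.univ_nonempty p + δ)
    (hΔ2 : ∀ v w : G,
      (p v + Δ v) - (p w + Δ w) ≤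
        (Finset.univ.sup' Finset.univ_nonempty p
          - Finset.univ.inf' Finset.univ_nonempty p) / 2 + δ)
    (hΔt : ∀ v : G, Δt v =
      if δ + 2 * c ≤ Δ v then c else if Δ v ≤ -(2 * c) then -c else 0) :
    ∀ v w : G,
      (p v + Δt v) - (p w + Δt w) ≤
        max ((Finset.univ.sup' Finset.univ_nonempty p
          - Finset.univ.inf' Finset.univ_nonempty p) - c) (4 * δ + 10 * c) := by
  intro v w
  set m := Finset.univ.inf' Finset.univ_nonempty p with hm
  set M := Finset.univ.sup' Finset.univ_nonempty p with hM
  have hpvM : p v ≤ M := Finset.le_sup' p (Finset.mem_univ v)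
  have hpwm : m ≤ p w := Finset.inf'_le p (Finset.mem_univ w)
  have h1 := (hΔ v).1
  have h2 := (hΔ v).2
  have h3 := (hΔ w).1
  have h4 := (hΔ w).2
  have hag := hΔ2 v w
  rw [hΔt v, hΔt w]
  split_ifs with h5 h6 h7 h8 h9 h10 <;>
  · try push_neg at h5
    try push_neg at h6
    try push_neg at h7
    try push_neg at h8
    try push_neg at h9
    try push_neg at h10
    rcases le_or_gt (4 * δ + 10 * c) (M - m) with h | h
    · exact le_trans (by linarith) (le_max_left _ _)
    · exact le_trans (by linarith) (le_max_right _ _)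
end

section
/- Let G be a finite nonempty set, p : G → ℝ, δ ≥ 0, c ≥ 0 reals, and for each v ∈ G let Δ_v ∈ ℝ satisfy min_{x∈G} p(x) ≤ p(v) + Δ_v ≤ max_{x∈G} p(x) + δ. Define the thresholded adjustment Δ̃_v := c if Δ_v ≥ δ + 2c, Δ̃_v := −c if Δ_v ≤ −2c, and Δ̃_v := 0 otherwise. If ‖p‖ := max_{x∈G} p(x) − min_{x∈G} p(x) < 2c, then Δ̃_v = 0 for all v ∈ G. -/
/-- Paper: Lemma 5. If skews are small enough (spread of pulse times below
`2c`), the global synchronization algorithm applies no clock correction: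
all thresholded adjustments `Δ̃_v` are zero. -/
theorem stmt8 (G : Type*) [Fintype G] [Nonempty G]
    (p Δ Δt : G → ℝ) (δ c : ℝ) (hδ : 0 ≤ δ) (hc : 0 ≤ c)
    (hΔ : ∀ v : G,
      Finset.univ.inf' Finset.univ_nonempty p ≤ p v + Δ v ∧
      p v + Δ v ≤ Finset.univ.sup' Finset.univ_nonempty p + δ)
    (hΔt : ∀ v : G, Δt v =
      if δ + 2 * c ≤ Δ v then c else if Δ v ≤ -(2 * c) then -c else 0)
    (hsmall : Finset.univ.sup' Finset.univ_nonempty p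
      - Finset.univ.inf' Finset.univ_nonempty p < 2 * c) :
    ∀ v : G, Δt v = 0 := by
  intro v
  have hps : p v ≤ Finset.univ.sup' Finset.univ_nonempty p :=
    Finset.le_sup' p (Finset.mem_univ v)
  have hpi : Finset.univ.inf' Finset.univ_nonempty p ≤ p v :=
    Finset.inf'_le p (Finset.mem_univ v)
  obtain ⟨h1, h2⟩ := hΔ v
  rw [hΔt v, if_neg (by linarith), if_neg (by linarith)]
end

section
/- Let G be a finite nonempty set and δ ≥ 0, c > 0, J > 0, ϱ ≥ 0 reals with 2ϱ·(c + J) ≤ c. Let p : ℕ≥1 → G → ℝ (pulse times by round) and Δ : ℕ≥1 → G → ℝ (computed adjustments), and let Δ̃ be the thresholded adjustment of Δ: Δ̃_{v,r} := c if Δ_{v,r} ≥ δ + 2c, Δ̃_{v,r} := −c if Δ_{v,r} ≤ −2c, and Δ̃_{v,r} := 0 otherwise. Set B := 4δ + 11c and ‖p_r‖ := max_{x∈G} p_{x,r} − min_{x∈G} p_{x,r}. Assume ‖p_1‖ ≤ B, and assume that for every round r ≥ 1 with ‖p_r‖ ≤ B: (i) for all v ∈ G: min_{x∈G} p_{x,r}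 ≤ p_{v,r} + Δ_{v,r} ≤ max_{x∈G} p_{x,r} + δ; (ii) for all v, w ∈ G: (p_{v,r} + Δ_{v,r}) − (p_{w,r} + Δ_{w,r}) ≤ ‖p_r‖/2 + δ; (iii) for all v, w ∈ G: p_{v,r+1} − p_{w,r+1} ≤ (p_{v,r} + Δ̃_{v,r}) − (p_{w,r} + Δ̃_{w,r}) + 2ϱ·(c + J). Then ‖p_r‖ ≤ 4δ + 11c for all r ≥ 1. -/
/-- The spread `‖p‖ = max_{x∈G} p x − min_{x∈G} p x` of a real-valued family
over a finite nonempty index type. -/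
noncomputable def spread {G : Type*} [Fintype G] [Nonempty G] (p : G → ℝ) : ℝ :=
  Finset.univ.sup' Finset.univ_nonempty p - Finset.univ.inf' Finset.univ_nonempty p

/-- Paper: Theorem 1. Worst-case skew bound of the global synchronization
algorithm: if in every round whose spread is within the target bound the
fault-tolerant midpoint satisfies validity and approximate agreement, the
thresholded capped corrections are applied, and drift per round is bounded by
`2ϱ(c + J) ≤ c`, then the spread of pulse times stays at most `4δ + 11c`. -/
theorem stmt9 (G : Type*) [Fintype G] [Nonempty G]
    (δ c J ϱ : ℝ) (hδ : 0 ≤ δ) (hc : 0 < c) (hJ : 0 < J) (hϱ : 0 ≤ ϱ)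
    (hparam : 2 * ϱ * (c + J) ≤ c)
    (p Δ Δt : ℕ → G → ℝ)
    (hΔt : ∀ r : ℕ, ∀ v : G, Δt r v =
      if δ + 2 * c ≤ Δ r v then c else if Δ r v ≤ -(2 * c) then -c else 0)
    (hinit : spread (p 1) ≤ 4 * δ + 11 * c)
    (hvalid : ∀ r : ℕ, 1 ≤ r → spread (p r) ≤ 4 * δ + 11 * c →
      ∀ v : G,
        Finset.univ.inf' Finset.univ_nonempty (p r) ≤ p r v + Δ r v ∧
        p r v + Δ r v ≤ Finset.univ.sup' Finset.univ_nonempty (p r) + δ)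
    (hagree : ∀ r : ℕ, 1 ≤ r → spread (p r) ≤ 4 * δ + 11 * c →
      ∀ v w : G,
        (p r v + Δ r v) - (p r w + Δ r w) ≤ spread (p r) / 2 + δ)
    (hnext : ∀ r : ℕ, 1 ≤ r → spread (p r) ≤ 4 * δ + 11 * c →
      ∀ v w : G,
        p (r + 1) v - p (r + 1) w ≤
          (p r v + Δt r v) - (p r w + Δt r w) + 2 * ϱ * (c + J)) :
    ∀ r : ℕ, 1 ≤ r → spread (p r) ≤ 4 * δ + 11 * c := by
  intro r hr
  induction r, hr using Nat.le_induction with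
  | base => exact hinit
  | succ r hr ih =>
    have hvv := hvalid r hr ih
    have hag := hagree r hr ih
    have hnx := hnext r hr ih
    set M := Finset.univ.sup' Finset.univ_nonempty (p r) with hMdef
    set m := Finset.univ.inf' Finset.univ_nonempty (p r) with hmdef
    have hSspread : spread (p r) = M - m := rfl
    have hS : M - m ≤ 4 * δ + 11 * c := by rw [← hSspread]; exact ih
    have hM : ∀ x : G, p r x ≤ M := fun x => Finset.le_sup' _ (Finset.mem_univ x)
    have hm : ∀ x : G, m ≤ p r x := fun x => Finset.inf'_le _ (Finset.mem_univ x)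
    have key : ∀ v w : G, p (r + 1) v - p (r + 1) w ≤ 4 * δ + 11 * c := by
      intro v w
      have h1 := hnx v w
      have h2v := hvv v
      have h2w := hvv w
      have h3 := hag v w
      rw [hSspread] at h3
      have hDv := hΔt r v
      have hDw := hΔt r w
      by_cases hv1 : δ + 2 * c ≤ Δ r v
      · rw [if_pos hv1] at hDv
        by_cases hw1 : δ + 2 * c ≤ Δ r w
        · rw [if_pos hw1] at hDw
          linarith [hm w, h2v.2]
        · rw [if_neg hw1] at hDw
          by_cases hw2 : Δ r w ≤ -(2 * c)
          · rw [if_pos hw2] at hDw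
            linarith [h2v.2, h2w.1]
          · rw [if_neg hw2] at hDw
            linarith [h2v.2, hm w]
      · rw [if_neg hv1] at hDv
        by_cases hv2 : Δ r v ≤ -(2 * c)
        · rw [if_pos hv2] at hDv
          by_cases hw1 : δ + 2 * c ≤ Δ r w
          · rw [if_pos hw1] at hDw
            linarith [hM v, hm w]
          · rw [if_neg hw1] at hDw
            by_cases hw2 : Δ r w ≤ -(2 * c)
            · rw [if_pos hw2] at hDw
              linarith [hM v, h2w.1]
            · rw [if_neg hw2] at hDw
              linarith [hM v, hm w]
        · rw [if_neg hv2] at hDv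
          by_cases hw1 : δ + 2 * c ≤ Δ r w
          · rw [if_pos hw1] at hDw
            linarith [hM v, hm w]
          · rw [if_neg hw1] at hDw
            by_cases hw2 : Δ r w ≤ -(2 * c)
            · rw [if_pos hw2] at hDw
              linarith [hM v, h2w.1]
            · rw [if_neg hw2] at hDw
              -- both thresholded to 0: use approximate agreement
              linarith [h3]
    obtain ⟨v, -, hv⟩ := Finset.exists_mem_eq_sup' Finset.univ_nonempty (p (r + 1))
    obtain ⟨w, -, hw⟩ := Finset.exists_mem_eq_inf' Finset.univ_nonempty (p (r + 1))
    show Finset.univ.sup' Finset.univ_nonempty (p (r + 1)) -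
        Finset.univ.inf' Finset.univ_nonempty (p (r + 1)) ≤ 4 * δ + 11 * c
    rw [hv, hw]
    exact key v w
end

section
/- Let G be a finite nonempty set, and let ϑ ≥ 1, I ≥ 0, δ ≥ 0, c > 0, J > 0 be reals with 4·(ϑ − 1)·I < 2c. Let T_r := T_1 + (r − 1)·J for r ≥ 1, let p : ℕ≥1 → G → ℝ and Δ : ℕ≥1 → G → ℝ, and let Δ̃ be the thresholded adjustment of Δ: Δ̃_{v,r} := c if Δ_{v,r} ≥ δ + 2c, Δ̃_{v,r} := −c if Δ_{v,r} ≤ −2c, and Δ̃_{v,r} := 0 otherwise. Assume: (i) for every r ≥ 1, if Δ̃_{x,s} = 0 for all x ∈ G and all 1 ≤ s < r, then |p_{v,r} − T_r| ≤ 2·(ϑ − 1)·I for all v ∈ G; (ii) for every r ≥ 1 and every v ∈ G: min_{x∈G} p_{x,r} ≤ p_{v,r} + Δ_{v,r} ≤ max_{x∈G} p_{x,r} + δ. Then for all r ≥ 1: Δ̃_{v,r} = 0 for all v ∈ G, and |p_{v,r} − p_{w,r}| ≤ 4·(ϑ − 1)·I for all v, w ∈ G. -/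
/-- Paper: Theorem 2. Normal operation: if, as long as no global corrections
have been applied, each node starts round `r` within `2(ϑ−1)I` of the nominal
time `T_r = T₁ + (r−1)J` (locally corrected clocks track real time), and the
fault-tolerant midpoint is valid, then the global algorithm never interferes
(`Δ̃_{v,r} = 0`) and the skew stays at most `4(ϑ−1)I`. -/
theorem stmt10 (G : Type*) [Fintype G] [Nonempty G]
    (ϑ I δ c J T₁ : ℝ) (hϑ : 1 ≤ ϑ) (hI : 0 ≤ I) (hδ : 0 ≤ δ)
    (hc : 0 < c) (hJ : 0 < J) (hsmall : 4 * (ϑ - 1) * I < 2 * c)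
    (p Δ Δt : ℕ → G → ℝ)
    (hΔt : ∀ r : ℕ, ∀ v : G, Δt r v =
      if δ + 2 * c ≤ Δ r v then c else if Δ r v ≤ -(2 * c) then -c else 0)
    (htrack : ∀ r : ℕ, 1 ≤ r →
      (∀ x : G, ∀ s : ℕ, 1 ≤ s → s < r → Δt s x = 0) →
      ∀ v : G, |p r v - (T₁ + ((r : ℝ) - 1) * J)| ≤ 2 * (ϑ - 1) * I)
    (hvalid : ∀ r : ℕ, 1 ≤ r → ∀ v : G,
      Finset.univ.inf' Finset.univ_nonempty (p r) ≤ p r v + Δ r v ∧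
      p r v + Δ r v ≤ Finset.univ.sup' Finset.univ_nonempty (p r) + δ) :
    ∀ r : ℕ, 1 ≤ r →
      (∀ v : G, Δt r v = 0) ∧
      (∀ v w : G, |p r v - p r w| ≤ 4 * (ϑ - 1) * I) := by
  intro r
  induction r using Nat.strong_induction_on with
  | _ r ih =>
    intro hr
    have hzero : ∀ x : G, ∀ s : ℕ, 1 ≤ s → s < r → Δt s x = 0 := by
      intro x s hs1 hsr
      exact (ih s hsr hs1).1 x
    have htr := htrack r hr hzero
    have hskew : ∀ v w : G, |p r v - p r w| ≤ 4 * (ϑ - 1) * I := by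
      intro v w
      have h1 := htr v
      have h2 := htr w
      have : p r v - p r w = (p r v - (T₁ + ((r:ℝ) - 1) * J)) - (p r w - (T₁ + ((r:ℝ) - 1) * J)) := by ring
      rw [this]
      calc |(p r v - (T₁ + ((r:ℝ) - 1) * J)) - (p r w - (T₁ + ((r:ℝ) - 1) * J))|
          ≤ |p r v - (T₁ + ((r:ℝ) - 1) * J)| + |p r w - (T₁ + ((r:ℝ) - 1) * J)| := abs_sub _ _
        _ ≤ 2 * (ϑ - 1) * I + 2 * (ϑ - 1) * I := add_le_add h1 h2
        _ = 4 * (ϑ - 1) * I := by ring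
    refine ⟨?_, hskew⟩
    intro v
    obtain ⟨hlo, hhi⟩ := hvalid r hr v
    obtain ⟨a, -, ha⟩ := Finset.exists_mem_eq_inf' (Finset.univ_nonempty) (p r)
    obtain ⟨b, -, hb⟩ := Finset.exists_mem_eq_sup' (Finset.univ_nonempty) (p r)
    rw [ha] at hlo
    rw [hb] at hhi
    have hva := abs_le.mp (hskew a v)
    have hbv := abs_le.mp (hskew b v)
    have hΔhi : Δ r v < δ + 2 * c := by cases hva; cases hbv; linarith
    have hΔlo : -(2 * c) < Δ r v := by cases hva; cases hbv; linarith
    rw [hΔt r v, if_neg (by linarith), if_neg (by linarith)]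
end

section
/- Let G be a finite nonempty set, ϱ ≥ 0, J > 0, t₀ ∈ ℝ, R ∈ ℝ, and set T_r := R + (r − 1)·J for r ≥ 1. Let p : ℕ≥1 → G → ℝ and q : ℕ≥1 → G → ℝ satisfy: (i) |p_{v,1} − T_1| ≤ ϱ·max{T_1 − t₀, 0} for all v ∈ G; (ii) for all r ≥ 1 and v ∈ G: min_{x∈G} p_{x,r} ≤ q_{v,r} ≤ max_{x∈G} p_{x,r}; (iii) for all r ≥ 1 and v ∈ G: |p_{v,r+1} − (q_{v,r} + J)| ≤ ϱ·max{min{J, T_{r+1} − t₀}, 0}. Then for all r ≥ 1 and v ∈ G: |p_{v,r} − T_r| ≤ ϱ·max{T_r − t₀, 0}. -/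
lemma stmt11_aux (J a : ℝ) (hJ : 0 < J) :
    max a 0 + max (min J (a + J)) 0 = max (a + J) 0 := by
  rcases le_total 0 a with h | h
  · rw [max_eq_left h, min_eq_left (by linarith), max_eq_left hJ.le,
      max_eq_left (by linarith)]
  · rw [max_eq_right h]
    rcases le_total 0 (a + J) with h2 | h2
    · rw [min_eq_right (by linarith), max_eq_left h2]; ring
    · rw [min_eq_right (by linarith), max_eq_right h2]; ring

/-- Paper: Lemma 6. Bounded impact of reference failure: `p r v` is the real
time at which correct node `v` starts round `r`, `T_r = R + (r−1)J` the
nominal round start time, and `q r v` the adjusted pulse time, which always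
lies within the envelope of pulse times. If deviation accumulates at rate at
most `ϱ` and only over the portion of time after the failure time `t₀`, then
`|p r v − T_r| ≤ ϱ · max{T_r − t₀, 0}` for all rounds `r ≥ 1`. -/
theorem stmt11 (G : Type*) [Fintype G] [Nonempty G]
    (ϱ J t₀ R : ℝ) (hϱ : 0 ≤ ϱ) (hJ : 0 < J)
    (p q : ℕ → G → ℝ)
    (hinit : ∀ v : G, |p 1 v - R| ≤ ϱ * max (R - t₀) 0)
    (henv : ∀ r : ℕ, 1 ≤ r → ∀ v : G,
      Finset.univ.inf' Finset.univ_nonempty (p r) ≤ q r v ∧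
      q r v ≤ Finset.univ.sup' Finset.univ_nonempty (p r))
    (hnext : ∀ r : ℕ, 1 ≤ r → ∀ v : G,
      |p (r + 1) v - (q r v + J)| ≤
        ϱ * max (min J (R + ((r : ℝ) + 1 - 1) * J - t₀)) 0) :
    ∀ r : ℕ, 1 ≤ r → ∀ v : G,
      |p r v - (R + ((r : ℝ) - 1) * J)| ≤
        ϱ * max (R + ((r : ℝ) - 1) * J - t₀) 0 := by
  intro r hr
  induction r, hr using Nat.le_induction with
  | base =>
    intro v
    have := hinit v
    norm_num
    convert this using 3 <;> ring
  | succ r hr ih =>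
    intro v
    set Tr : ℝ := R + ((r : ℝ) - 1) * J with hTr
    -- bound on q r v
    have hq : |q r v - Tr| ≤ ϱ * max (Tr - t₀) 0 := by
      obtain ⟨x, hx⟩ := Finset.exists_mem_eq_inf' (Finset.univ_nonempty (α := G)) (p r)
      obtain ⟨y, hy⟩ := Finset.exists_mem_eq_sup' (Finset.univ_nonempty (α := G)) (p r)
      have h1 := (henv r hr v).1
      have h2 := (henv r hr v).2
      rw [hx.2] at h1
      rw [hy.2] at h2
      have hbx := abs_le.mp (ih x)
      have hby := abs_le.mp (ih y)
      rw [abs_le]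
      constructor <;> [linarith [hbx.1]; linarith [hby.2]]
    have hn := hnext r hr v
    have key : max (Tr - t₀) 0 + max (min J (R + ((r : ℝ) + 1 - 1) * J - t₀)) 0
        = max (R + (((r : ℝ) + 1) - 1) * J - t₀) 0 := by
      have e1 : R + ((r : ℝ) + 1 - 1) * J - t₀ = (Tr - t₀) + J := by rw [hTr]; ring
      have e2 : R + (((r : ℝ) + 1) - 1) * J - t₀ = (Tr - t₀) + J := by rw [hTr]; ring
      rw [e1, stmt11_aux J (Tr - t₀) hJ]
    have htri : |p (r + 1) v - (R + (((r : ℝ) + 1) - 1) * J)|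
        ≤ |p (r + 1) v - (q r v + J)| + |q r v - Tr| := by
      have : p (r + 1) v - (R + (((r : ℝ) + 1) - 1) * J)
          = (p (r + 1) v - (q r v + J)) + (q r v - Tr) := by rw [hTr]; ring
      rw [this]
      exact abs_add_le _ _
    have : |p (r + 1) v - (R + (((r : ℝ) + 1) - 1) * J)|
        ≤ ϱ * max (min J (R + ((r : ℝ) + 1 - 1) * J - t₀)) 0 + ϱ * max (Tr - t₀) 0 := by
      linarith
    calc |p (r + 1) v - (R + ((↑(r + 1) : ℝ) - 1) * J)|
        = |p (r + 1) v - (R + (((r : ℝ) + 1) - 1) * J)| := by push_cast; ring_nf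
      _ ≤ _ := this
      _ = ϱ * max (R + (((r : ℝ) + 1) - 1) * J - t₀) 0 := by rw [← key]; ring
      _ = ϱ * max (R + ((↑(r + 1) : ℝ) - 1) * J - t₀) 0 := by push_cast; ring_nf
end

section
/- Let G be a finite nonempty set and let ϑ ≥ 1, X > 1, I ≥ 0, J > 0, Y ≥ 0, ϱ ≥ 0 be reals with ε := 3·X·I/J < X − 1 and ϱ·(1 + Y·(ϑ − 1))·J ≤ Y·(ϑ − 1)·J − X·(ϑ − 1)·J. Fix r₀ ≥ 1, reals T_r := T_{r₀} + (r − r₀)·J, and p : ℕ≥1 → G → ℝ, Δ̃ : ℕ≥1 → G → ℝ. Assume for every r ≥ r₀ and every v ∈ G that one of the following holds: (A) |Δ̃_{v,r}| = Y·(ϑ − 1)·J, min_{x∈G} p_{x,r} + Y·(ϑ − 1)·J ≤ p_{v,r} + Δ̃_{v,r} ≤ max_{x∈G} p_{x,r} − Y·(ϑ − 1)·J, and |p_{v,r+1} − (p_{v,r} + Δ̃_{v,r} + J)| ≤ ϱ·(1 + Y·(ϑ − 1))·J; or (B) Δ̃_{v,r} = 0 and |p_{v,r+1} − T_{r+1}|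 ≤ max{|p_{v,r} − T_r| + 3·X·(ϑ − 1)·I − (X − 1)·(ϑ − 1)·J, 2·(ϑ − 1)·I}. Then for all r ≥ r₀ and all v ∈ G: |p_{v,r} − T_r| ≤ max{M − (X − 1 − ε)·(ϑ − 1)·(r − r₀)·J, 2·(ϑ − 1)·I}, where M := max_{x∈G} |p_{x,r₀} − T_{r₀}|. -/
/-- Paper: Lemma 7. Convergence after the reference clocks resume returning
the correct time from round `r₀` on: in each round every node either applies a
global correction that moves its adjusted pulse at least `Y(ϑ−1)J` inside the
envelope of pulse times (case A), or applies no global correction and the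
local synchronization reduces its offset to the nominal schedule (case B).
Then the deviation from the nominal schedule `T_r = T_{r₀} + (r−r₀)J` shrinks
at amortized rate `(X−1−ε)(ϑ−1)` per round, down to `2(ϑ−1)I`. -/
theorem stmt12 (G : Type*) [Fintype G] [Nonempty G]
    (ϑ X I J Y ϱ : ℝ) (hϑ : 1 ≤ ϑ) (hX : 1 < X) (hI : 0 ≤ I) (hJ : 0 < J)
    (hY : 0 ≤ Y) (hϱ : 0 ≤ ϱ)
    (hε : 3 * X * I / J < X - 1)
    (hparam : ϱ * (1 + Y * (ϑ - 1)) * J ≤ Y * (ϑ - 1) * J - X * (ϑ - 1) * J)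
    (r₀ : ℕ) (hr₀ : 1 ≤ r₀) (T₀ : ℝ)
    (p Δt : ℕ → G → ℝ)
    (hcase : ∀ r : ℕ, r₀ ≤ r → ∀ v : G,
      (|Δt r v| = Y * (ϑ - 1) * J ∧
        Finset.univ.inf' Finset.univ_nonempty (p r) + Y * (ϑ - 1) * J ≤
          p r v + Δt r v ∧
        p r v + Δt r v ≤
          Finset.univ.sup' Finset.univ_nonempty (p r) - Y * (ϑ - 1) * J ∧
        |p (r + 1) v - (p r v + Δt r v + J)| ≤ ϱ * (1 + Y * (ϑ - 1)) * J) ∨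
      (Δt r v = 0 ∧
        |p (r + 1) v - (T₀ + ((r : ℝ) + 1 - (r₀ : ℝ)) * J)| ≤
          max (|p r v - (T₀ + ((r : ℝ) - (r₀ : ℝ)) * J)|
                + 3 * X * (ϑ - 1) * I - (X - 1) * (ϑ - 1) * J)
            (2 * (ϑ - 1) * I))) :
    ∀ r : ℕ, r₀ ≤ r → ∀ v : G,
      |p r v - (T₀ + ((r : ℝ) - (r₀ : ℝ)) * J)| ≤
        max ((Finset.univ.sup' Finset.univ_nonempty
                (fun x : G => |p r₀ x - T₀|))
              - (X - 1 - 3 * X * I / J) * (ϑ - 1) * ((r : ℝ) - (r₀ : ℝ)) * J)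
          (2 * (ϑ - 1) * I) := by

  have hJ' : J ≠ 0 := ne_of_gt hJ
  have hϑ0 : 0 ≤ ϑ - 1 := by linarith
  have hε0 : 0 ≤ 3 * X * I / J := by positivity
  have hc0 : 0 ≤ (X - 1 - 3 * X * I / J) * (ϑ - 1) := mul_nonneg (by linarith) hϑ0
  have hcJ : 0 ≤ (X - 1 - 3 * X * I / J) * (ϑ - 1) * J := mul_nonneg hc0 hJ.le
  have hcX : (X - 1 - 3 * X * I / J) * (ϑ - 1) * J ≤ X * (ϑ - 1) * J := by
    nlinarith [mul_nonneg (mul_nonneg hε0 hϑ0) hJ.le, mul_nonneg hϑ0 hJ.le]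
  set M := Finset.univ.sup' Finset.univ_nonempty (fun x : G => |p r₀ x - T₀|) with hM
  intro r hr
  induction r, hr using Nat.le_induction with
  | base =>
    intro v
    have h1 : |p r₀ v - T₀| ≤ M := by
      rw [hM]; exact Finset.le_sup' (fun x : G => |p r₀ x - T₀|) (Finset.mem_univ v)
    have e1 : T₀ + ((r₀ : ℝ) - (r₀ : ℝ)) * J = T₀ := by ring
    have e2 : M - (X - 1 - 3 * X * I / J) * (ϑ - 1) * ((r₀ : ℝ) - (r₀ : ℝ)) * J = M := by
      ring
    rw [e1, e2]
    exact le_trans h1 (le_max_left _ _)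
  | succ r hr ih =>
    intro v
    push_cast
    have hBmax : max (M - (X - 1 - 3 * X * I / J) * (ϑ - 1) * ((r : ℝ) - (r₀ : ℝ)) * J)
        (2 * (ϑ - 1) * I) - (X - 1 - 3 * X * I / J) * (ϑ - 1) * J ≤
        max (M - (X - 1 - 3 * X * I / J) * (ϑ - 1) * ((r : ℝ) + 1 - (r₀ : ℝ)) * J)
        (2 * (ϑ - 1) * I) := by
      rcases max_choice (M - (X - 1 - 3 * X * I / J) * (ϑ - 1) * ((r : ℝ) - (r₀ : ℝ)) * J)
          (2 * (ϑ - 1) * I) with h | h <;> rw [h]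
      · have := le_max_left (M - (X - 1 - 3 * X * I / J) * (ϑ - 1) * ((r : ℝ) + 1 - (r₀ : ℝ)) * J)
          (2 * (ϑ - 1) * I)
        nlinarith [this]
      · have := le_max_right (M - (X - 1 - 3 * X * I / J) * (ϑ - 1) * ((r : ℝ) + 1 - (r₀ : ℝ)) * J)
          (2 * (ϑ - 1) * I)
        linarith
    rcases hcase r hr v with ⟨hA1, hA2, hA3, hA4⟩ | ⟨hB1, hB2⟩
    · -- Case A
      have hinf : T₀ + ((r : ℝ) - (r₀ : ℝ)) * J -
          max (M - (X - 1 - 3 * X * I / J) * (ϑ - 1) * ((r : ℝ) - (r₀ : ℝ)) * J)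
            (2 * (ϑ - 1) * I) ≤ Finset.univ.inf' Finset.univ_nonempty (p r) := by
        apply Finset.le_inf'
        intro x _
        have := ih x
        rw [abs_le] at this
        linarith [this.1]
      have hsup : Finset.univ.sup' Finset.univ_nonempty (p r) ≤
          T₀ + ((r : ℝ) - (r₀ : ℝ)) * J +
          max (M - (X - 1 - 3 * X * I / J) * (ϑ - 1) * ((r : ℝ) - (r₀ : ℝ)) * J)
            (2 * (ϑ - 1) * I) := by
        apply Finset.sup'_le
        intro x _
        have := ih x
        rw [abs_le] at this
        linarith [this.2]
      rw [abs_le] at hA4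
      refine le_trans ?_ hBmax
      rw [abs_le]
      constructor
      · linarith [hA4.1, hA2, hinf, hparam, hcX]
      · linarith [hA4.2, hA3, hsup, hparam, hcX]
    · -- Case B
      have hid : 3 * X * (ϑ - 1) * I - (X - 1) * (ϑ - 1) * J =
          -((X - 1 - 3 * X * I / J) * (ϑ - 1) * J) := by
        field_simp
        ring
      have h1 := ih v
      refine le_trans hB2 (max_le (le_trans ?_ hBmax) (le_max_right _ _))
      linarith [h1, hid]
end
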